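/- Let Δ(x,y,z) = 72xyz - 16y³ + 4x²y² - 16x³z - 108z², and v = (y/2, 3z, 2xz - y²/2). Then Δ is invariant under the flow of v up to the divergence: v · ∇Δ = (∇ · v) Δ, i.e., the field v/Δ is divergence-free on the region where Δ ≠ 0: ∇ · (v/Δ) = 0. -/

import Mathlib

noncomputable section

/-- Points/vectors in ℝ³. -/
abbrev V3 := ℝ × ℝ × ℝ

/-- Partial derivative in the first coordinate. -/
def pd1 (f : V3 → ℝ) (p : V3) : ℝ := deriv (fun t => f (t, p.2.1, p.2.2)) p.1
/-- Partial derivative in the second coordinate. -/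
def pd2 (f : V3 → ℝ) (p : V3) : ℝ := deriv (fun t => f (p.1, t, p.2.2)) p.2.1
/-- Partial derivative in the third coordinate. -/
def pd3 (f : V3 → ℝ) (p : V3) : ℝ := deriv (fun t => f (p.1, p.2.1, t)) p.2.2

/-- Gradient of a scalar function on ℝ³. -/
def grad (f : V3 → ℝ) (p : V3) : V3 := (pd1 f p, pd2 f p, pd3 f p)

/-- Euclidean dot product on ℝ³. -/
def dot (a b : V3) : ℝ := a.1 * b.1 + a.2.1 * b.2.1 + a.2.2 * b.2.2

/-- Cross product on ℝ³. -/
def cross (a b : V3) : V3 :=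
  (a.2.1 * b.2.2 - a.2.2 * b.2.1,
   a.2.2 * b.1 - a.1 * b.2.2,
   a.1 * b.2.1 - a.2.1 * b.1)

/-- Curl of a vector field on ℝ³. -/
def curl (F : V3 → V3) (p : V3) : V3 :=
  (pd2 (fun q => (F q).2.2) p - pd3 (fun q => (F q).2.1) p,
   pd3 (fun q => (F q).1) p - pd1 (fun q => (F q).2.2) p,
   pd1 (fun q => (F q).2.1) p - pd2 (fun q => (F q).1) p)

/-- Divergence of a vector field on ℝ³. -/
def diverg (F : V3 → V3) (p : V3) : ℝ :=
  pd1 (fun q => (F q).1) p + pd2 (fun q => (F q).2.1) p + pd3 (fun q => (F q).2.2) p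

/-- Jacobi–Lie bracket of vector fields on ℝ³ (componentwise `(X·∇)Y - (Y·∇)X`). -/
def lie (X Y : V3 → V3) (p : V3) : V3 :=
  (dot (X p) (grad (fun q => (Y q).1) p) - dot (Y p) (grad (fun q => (X q).1) p),
   dot (X p) (grad (fun q => (Y q).2.1) p) - dot (Y p) (grad (fun q => (X q).2.1) p),
   dot (X p) (grad (fun q => (Y q).2.2) p) - dot (Y p) (grad (fun q => (X q).2.2) p))

/-- The Darboux–Halphen vector field in symmetric polynomial coordinates. -/
def vDH (p : V3) : V3 :=
  (p.2.1 / 2, 3 * p.2.2, 2 * p.1 * p.2.2 - p.2.1 ^ 2 / 2)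

/-- The Darboux–Halphen discriminant Δ. -/
def ΔDH (p : V3) : ℝ :=
  72 * p.1 * p.2.1 * p.2.2 - 16 * p.2.1 ^ 3 + 4 * p.1 ^ 2 * p.2.1 ^ 2
    - 16 * p.1 ^ 3 * p.2.2 - 108 * p.2.2 ^ 2

/-!
`Δ` is a Darboux polynomial of `v` with cofactor `∇ · v = 2x`: expanding both sides of
`v · ∇Δ = 2x Δ` gives the same polynomial. For any nonvanishing `f` the quotient rule gives
`∇ · (v / f) = (f ∇ · v - v · ∇f) / f²`, so `1 / Δ` is a last multiplier of `v`.
-/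

section QuotientRule

variable {f g : V3 → ℝ} {p : V3}

theorem pd1_div (hf : DifferentiableAt ℝ f p) (hg : DifferentiableAt ℝ g p) (h0 : g p ≠ 0) :
    pd1 (fun q => f q / g q) p = (pd1 f p * g p - f p * pd1 g p) / g p ^ 2 :=
  deriv_div (hf.comp p.1 (by fun_prop)) (hg.comp p.1 (by fun_prop)) h0

theorem pd2_div (hf : DifferentiableAt ℝ f p) (hg : DifferentiableAt ℝ g p) (h0 : g p ≠ 0) :
    pd2 (fun q => f q / g q) p = (pd2 f p * g p - f p * pd2 g p) / g p ^ 2 :=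
  deriv_div (hf.comp p.2.1 (by fun_prop)) (hg.comp p.2.1 (by fun_prop)) h0

theorem pd3_div (hf : DifferentiableAt ℝ f p) (hg : DifferentiableAt ℝ g p) (h0 : g p ≠ 0) :
    pd3 (fun q => f q / g q) p = (pd3 f p * g p - f p * pd3 g p) / g p ^ 2 :=
  deriv_div (hf.comp p.2.2 (by fun_prop)) (hg.comp p.2.2 (by fun_prop)) h0

theorem diverg_inv_smul {F : V3 → V3} (hf : DifferentiableAt ℝ f p)
    (hF : DifferentiableAt ℝ F p) (h0 : f p ≠ 0) :
    diverg (fun q => (f q)⁻¹ • F q) p = (diverg F p * f p - dot (F p) (grad f p)) / f p ^ 2 := by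
  have hF₁ : DifferentiableAt ℝ (fun q => (F q).1) p := hF.fst
  have hF₂ : DifferentiableAt ℝ (fun q => (F q).2.1) p := hF.snd.fst
  have hF₃ : DifferentiableAt ℝ (fun q => (F q).2.2) p := hF.snd.snd
  simp only [diverg, Prod.smul_fst, Prod.smul_snd, smul_eq_mul, inv_mul_eq_div]
  rw [pd1_div hF₁ hf h0, pd2_div hF₂ hf h0, pd3_div hF₃ hf h0, dot, grad]
  ring

theorem diverg_inv_smul_eq_zero {F : V3 → V3} (hf : DifferentiableAt ℝ f p)
    (hF : DifferentiableAt ℝ F p) (h0 : f p ≠ 0)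
    (hdarboux : dot (F p) (grad f p) = diverg F p * f p) :
    diverg (fun q => (f q)⁻¹ • F q) p = 0 := by
  rw [diverg_inv_smul hf hF h0, hdarboux, sub_self, zero_div]

end QuotientRule

theorem differentiable_ΔDH : Differentiable ℝ ΔDH := by
  unfold ΔDH
  fun_prop

theorem differentiable_vDH : Differentiable ℝ vDH := by
  unfold vDH
  fun_prop

theorem grad_ΔDH (x y z : ℝ) :
    grad ΔDH (x, y, z) =
      (72 * y * z + 8 * x * y ^ 2 - 48 * x ^ 2 * z,
        72 * x * z + 8 * x ^ 2 * y - 48 * y ^ 2,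
        72 * x * y - 16 * x ^ 3 - 216 * z) := by
  simp (disch := fun_prop) only [grad, pd1, pd2, pd3, ΔDH, deriv_fun_sub, deriv_fun_add,
    deriv_fun_mul, deriv_fun_pow, deriv_id'', deriv_const, deriv_const_mul_id, Prod.mk.injEq]
  refine ⟨by ring, by ring, by ring⟩

theorem diverg_vDH (x y z : ℝ) : diverg vDH (x, y, z) = 2 * x := by
  simp (disch := fun_prop) [diverg, pd1, pd2, pd3, vDH]

theorem dot_vDH_grad_ΔDH (p : V3) : dot (vDH p) (grad ΔDH p) = diverg vDH p * ΔDH p := by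
  obtain ⟨x, y, z⟩ := p
  rw [grad_ΔDH, diverg_vDH, dot, vDH, ΔDH]
  ring

/-- v·∇Δ = (∇·v)Δ, and v/Δ is divergence-free where Δ ≠ 0. -/
theorem stmt18 :
    (∀ p : V3, dot (vDH p) (grad ΔDH p) = diverg vDH p * ΔDH p) ∧
    (∀ p : V3, ΔDH p ≠ 0 → diverg (fun q : V3 => (ΔDH q)⁻¹ • vDH q) p = 0) :=
  ⟨dot_vDH_grad_ΔDH, fun p hp =>
    diverg_inv_smul_eq_zero (differentiable_ΔDH p) (differentiable_vDH p) hp (dot_vDH_grad_ΔDH p)⟩
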